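/- arXiv:2409.14787 — 4 statements merged into one kernel-verified Lean document; each statement's English description precedes it below -/
import Mathlib

section
/- Let G be a simple graph that is a brick (i.e., G is 3-connected and, for every two distinct vertices x and y, the graph obtained from G by deleting x and y has a perfect matching), and let u be a vertex of degree 3 in G with neighbors a, b, c. Then the triangle-insertion G⟨u⟩ — the graph obtained from G − u by adding three new vertices x, y, z that are pairwise adjacent, together with the edges xa, yb, zc — is also a brick. -/
open SimpleGraph

/-- The number of perfect matchings of a graph. -/
noncomputable def numPM {V : Type*} (G : SimpleGraph V) : ℕ :=
  Set.ncard {M : G.Subgraph | M.IsPerfectMatching}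

/-- A graph is 3-connected if it has at least 4 vertices and deleting any set of at most
two vertices leaves a connected graph. -/
def ThreeConnected {V : Type*} [Fintype V] (G : SimpleGraph V) : Prop :=
  4 ≤ Fintype.card V ∧
    ∀ s : Set V, s.ncard ≤ 2 → (G.induce (sᶜ : Set V)).Connected

/-- A brick: a 3-connected graph such that deleting any two distinct vertices leaves
a graph with a perfect matching (Edmonds–Lovász–Pulleyblank characterization). -/
def IsBrick {V : Type*} [Fintype V] (G : SimpleGraph V) : Prop :=
  ThreeConnected G ∧
    ∀ x y : V, x ≠ y →
      ∃ M : (G.induce {v : V | v ≠ x ∧ v ≠ y}).Subgraph, M.IsPerfectMatching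

/-- A brick is extremal when its number of perfect matchings equals |E| - |V| + 1. -/
def IsExtremal {V : Type*} [Fintype V] (G : SimpleGraph V) : Prop :=
  numPM G + Fintype.card V = G.edgeSet.ncard + 1

/-- Triangle-insertion at a vertex `u` with neighbors `a`, `b`, `c`: delete `u`,
add three pairwise adjacent new vertices `x = inr 0`, `y = inr 1`, `z = inr 2`,
together with the edges `x a`, `y b`, `z c`. -/
def triangleInsert {V : Type*} (G : SimpleGraph V) (u a b c : V) :
    SimpleGraph ({v : V // v ≠ u} ⊕ Fin 3) :=
  SimpleGraph.fromRel (fun p q =>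
    (∃ v w : {v : V // v ≠ u}, p = Sum.inl v ∧ q = Sum.inl w ∧ G.Adj v w) ∨
    (∃ v : {v : V // v ≠ u}, p = Sum.inl v ∧
      ((q = Sum.inr 0 ∧ (v : V) = a) ∨ (q = Sum.inr 1 ∧ (v : V) = b) ∨
       (q = Sum.inr 2 ∧ (v : V) = c))) ∨
    (∃ i j : Fin 3, p = Sum.inr i ∧ q = Sum.inr j))

/-!
For `t : Fin 3` let `ι_t = triangleLift u t : V → G⟨u⟩` be the identity off `u` and send `u` to
the triangle vertex `t`; writing `a_0, a_1, a_2` for `a, b, c`, it maps the edge `u a_t` and every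
edge of `G - u` to an edge of `G⟨u⟩`.

Matchings: to delete `p` and the triangle vertex `i`, or `p` and `q`, or the triangle vertices
`i ≠ j`, take a perfect matching of `G - {u, p}`, of `G - {p, q}` (where `u` is matched to some
`a_t`), or of `G - {u, a_k}` with `k` the third triangle vertex; carry it along `ι_i`, `ι_t` or
`ι_k`, and add one edge: the two remaining triangle vertices in the first two cases, `a_k k` in
the last.

Connectivity: if `s` is a set of at most two vertices of `G⟨u⟩`, let `t` be a deleted triangle
vertex if there is one. Then `ι_t⁻¹ s` has at most two vertices, so `G - ι_t⁻¹ s` is connected,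
and `ι_t` maps it into one component of `G⟨u⟩ - s`: an edge `u a_r` becomes a path through the
triangle, which is intact whenever `ι_t u` survives. A surviving triangle vertex reaches that
component through its own neighbour `a_r` or, if `a_r` is deleted, through the third triangle
vertex.
-/

namespace SimpleGraph

variable {V W : Type*}

def IsMatchingOn (G : SimpleGraph V) (s : Set V) (f : V → V) : Prop :=
  ∀ v ∈ s, f v ∈ s ∧ f (f v) = v ∧ G.Adj v (f v)

lemma exists_isPerfectMatching_induce_iff {G : SimpleGraph V} {s : Set V} :
    (∃ M : (G.induce s).Subgraph, M.IsPerfectMatching) ↔ ∃ f, G.IsMatchingOn s f := by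
  classical
  constructor
  · rintro ⟨M, hM⟩
    choose g hg hg' using fun x : s => hM.1 (hM.2 x)
    refine ⟨fun v => if hv : v ∈ s then g ⟨v, hv⟩ else v, fun v hv => ?_⟩
    have hgg : g (g ⟨v, hv⟩) = ⟨v, hv⟩ := (hg' _ _ (hg ⟨v, hv⟩).symm).symm
    simp only [hv, Subtype.coe_prop, dif_pos, Subtype.coe_eta, hgg, true_and]
    exact M.adj_sub (hg ⟨v, hv⟩)
  · rintro ⟨f, hf⟩
    refine ⟨{ verts := Set.univ
              Adj := fun x y => (y : V) = f x
              adj_sub := ?_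
              edge_vert := fun _ => trivial
              symm := ⟨fun x y (hy : (y : V) = f x) => ?_⟩ }, ?_, fun _ => trivial⟩
    · rintro x y (hy : (y : V) = f x)
      simpa [hy] using (hf x x.2).2.2
    · show (x : V) = f y
      rw [hy, (hf x x.2).2.1]
    · rintro v -
      exact ⟨⟨f v, (hf v v.2).1⟩, rfl, fun y hy => Subtype.ext hy⟩

lemma IsMatchingOn.exists_union {G : SimpleGraph V} {s t : Set V} {f g : V → V}
    (hf : G.IsMatchingOn s f) (hg : G.IsMatchingOn t g) (hst : Disjoint s t) :
    ∃ h, G.IsMatchingOn (s ∪ t) h := by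
  classical
  refine ⟨s.piecewise f g, ?_⟩
  rintro v (hv | hv)
  · obtain ⟨hfv, hffv, hadj⟩ := hf v hv
    simp [Set.piecewise_eq_of_mem, hv, hfv, hffv, hadj]
  · obtain ⟨hgv, hggv, hadj⟩ := hg v hv
    simp [Set.piecewise_eq_of_notMem, hst.notMem_of_mem_right hv,
      hst.notMem_of_mem_right hgv, hgv, hggv, hadj]

lemma isMatchingOn_pair [DecidableEq V] {G : SimpleGraph V} {x y : V} (h : G.Adj x y) :
    G.IsMatchingOn {x, y} (Equiv.swap x y) := by
  rintro v (rfl | rfl) <;> simp [h, h.symm]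

lemma IsMatchingOn.exists_image {G : SimpleGraph V} {H : SimpleGraph W} {s : Set V}
    {f : V → V} {ι : V → W} (hι : ι.Injective) (hf : G.IsMatchingOn s f)
    (hadj : ∀ v ∈ s, H.Adj (ι v) (ι (f v))) : ∃ g, H.IsMatchingOn (ι '' s) g := by
  refine ⟨Function.extend ι (ι ∘ f) id, ?_⟩
  rintro _ ⟨v, hv, rfl⟩
  obtain ⟨hfv, hffv, -⟩ := hf v hv
  simp only [hι.extend_apply, Function.comp_apply]
  exact ⟨Set.mem_image_of_mem ι hfv, by rw [hffv], hadj v hv⟩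

lemma Reachable.map_of_adj {G : SimpleGraph V} {H : SimpleGraph W} (f : V → W)
    (hf : ∀ ⦃x y⦄, G.Adj x y → H.Reachable (f x) (f y)) {x y : V} (h : G.Reachable x y) :
    H.Reachable (f x) (f y) := by
  rw [reachable_iff_reflTransGen] at h ⊢
  exact Relation.ReflTransGen.lift' f
    (fun x y hxy => (reachable_iff_reflTransGen _ _).mp (hf hxy)) _ _ h

lemma Connected.of_map_reachable {G : SimpleGraph V} {H : SimpleGraph W} (hG : G.Connected)
    (f : V → W) (hf : ∀ ⦃x y⦄, G.Adj x y → H.Reachable (f x) (f y))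
    (hcover : ∀ w, ∃ v, H.Reachable w (f v)) : H.Connected := by
  obtain ⟨v₀⟩ := hG.nonempty
  refine (connected_iff_exists_forall_reachable _).mpr ⟨f v₀, fun w => ?_⟩
  obtain ⟨v, hv⟩ := hcover w
  exact ((hG.preconnected v₀ v).map_of_adj f hf).trans hv.symm

end SimpleGraph

lemma IsBrick.exists_isMatchingOn {V : Type*} [Fintype V] {G : SimpleGraph V} (hG : IsBrick G)
    {x y : V} (h : x ≠ y) : ∃ f, G.IsMatchingOn {v | v ≠ x ∧ v ≠ y} f :=
  exists_isPerfectMatching_induce_iff.mp (hG.2 x y h)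

lemma Fin.ne_iff_eq_add_one_or_eq_add_two {r i : Fin 3} : r ≠ i ↔ r = i + 1 ∨ r = i + 2 := by
  revert r i; decide

lemma Fin.exists_forall_eq_iff_ne_and_ne {i j : Fin 3} (h : i ≠ j) :
    ∃ k, ∀ r, r = k ↔ r ≠ i ∧ r ≠ j := by
  revert i j; decide

section TriangleInsert

variable {V : Type*} {G : SimpleGraph V} {u a b c : V}

@[simp]
lemma triangleInsert_adj_inl_inl {v w : {v : V // v ≠ u}} :
    (triangleInsert G u a b c).Adj (Sum.inl v) (Sum.inl w) ↔ G.Adj v w := by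
  constructor
  · rintro ⟨-, h | h⟩ <;>
      rcases h with ⟨v', w', h1, h2, h3⟩ | ⟨v', h1, h⟩ | ⟨i, j, h1, h2⟩ <;>
      simp_all [adj_comm]
  · intro h
    exact ⟨by simpa [Subtype.ext_iff] using h.ne, Or.inl (Or.inl ⟨v, w, rfl, rfl, h⟩)⟩

@[simp]
lemma triangleInsert_adj_inl_inr {v : {v : V // v ≠ u}} {i : Fin 3} :
    (triangleInsert G u a b c).Adj (Sum.inl v) (Sum.inr i) ↔ (v : V) = ![a, b, c] i := by
  constructor
  · rintro ⟨-, h | h⟩ <;>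
      rcases h with ⟨v', w', h1, h2, h3⟩ | ⟨v', h1, h⟩ | ⟨i', j', h1, h2⟩ <;>
      simp_all
    all_goals rcases h with ⟨rfl, h⟩ | ⟨rfl, h⟩ | ⟨rfl, h⟩ <;> simp [h]
  · intro h
    refine ⟨by simp, Or.inl (Or.inr (Or.inl ⟨v, rfl, ?_⟩))⟩
    fin_cases i <;> simp_all

@[simp]
lemma triangleInsert_adj_inr_inl {v : {v : V // v ≠ u}} {i : Fin 3} :
    (triangleInsert G u a b c).Adj (Sum.inr i) (Sum.inl v) ↔ (v : V) = ![a, b, c] i := by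
  rw [adj_comm, triangleInsert_adj_inl_inr]

@[simp]
lemma triangleInsert_adj_inr_inr {i j : Fin 3} :
    (triangleInsert G u a b c).Adj (Sum.inr i) (Sum.inr j) ↔ i ≠ j := by
  refine ⟨fun h => by simpa using h.ne, fun h => ⟨by simpa using h, ?_⟩⟩
  exact Or.inl (Or.inr (Or.inr ⟨i, j, rfl, rfl⟩))

lemma exists_eq_of_adj_of_neighborSet_eq (hN : G.neighborSet u = {a, b, c}) {v : V}
    (h : G.Adj u v) : ∃ i, v = ![a, b, c] i := by
  rw [← mem_neighborSet, hN] at h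
  rcases h with rfl | rfl | rfl
  exacts [⟨0, rfl⟩, ⟨1, rfl⟩, ⟨2, rfl⟩]

lemma adj_of_neighborSet_eq (hN : G.neighborSet u = {a, b, c}) (i : Fin 3) :
    G.Adj u (![a, b, c] i) := by
  rw [← mem_neighborSet, hN]
  fin_cases i <;> simp

lemma triangleInsert_induce_reachable_inr_inr {T : Set ({v : V // v ≠ u} ⊕ Fin 3)}
    {r t : Fin 3} (hr : Sum.inr r ∈ T) (ht : Sum.inr t ∈ T) :
    ((triangleInsert G u a b c).induce T).Reachable ⟨_, hr⟩ ⟨_, ht⟩ := by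
  rcases eq_or_ne r t with rfl | h
  · rfl
  · exact Adj.reachable (by simpa using h)

variable [DecidableEq V] {t : Fin 3}

def triangleLift (u : V) (t : Fin 3) (v : V) : {v : V // v ≠ u} ⊕ Fin 3 :=
  if h : v = u then Sum.inr t else Sum.inl ⟨v, h⟩

@[simp]
lemma triangleLift_self : triangleLift u t u = Sum.inr t := dif_pos rfl

lemma triangleLift_of_ne {v : V} (h : v ≠ u) : triangleLift u t v = Sum.inl ⟨v, h⟩ :=
  dif_neg h

@[simp]
lemma triangleLift_coe (v : {v : V // v ≠ u}) : triangleLift u t v = Sum.inl v :=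
  triangleLift_of_ne v.2

lemma triangleLift_injective : Function.Injective (triangleLift u t) := by
  intro v w h
  by_cases hv : v = u <;> by_cases hw : w = u
  · rw [hv, hw]
  all_goals simp_all [triangleLift_of_ne]

@[simp]
lemma triangleLift_eq_inl {v : V} {w : {v : V // v ≠ u}} :
    triangleLift u t v = Sum.inl w ↔ v = w := by
  by_cases hv : v = u
  · simp [hv, w.2.symm]
  · simp [triangleLift_of_ne hv, Subtype.ext_iff]

@[simp]
lemma triangleLift_eq_inr {v : V} {r : Fin 3} :
    triangleLift u t v = Sum.inr r ↔ v = u ∧ t = r := by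
  by_cases hv : v = u
  · simp [hv]
  · simp [triangleLift_of_ne hv, hv]

lemma triangleInsert_adj_triangleLift {v w : V} (h : G.Adj v w) (hv : v = u → w = ![a, b, c] t)
    (hw : w = u → v = ![a, b, c] t) :
    (triangleInsert G u a b c).Adj (triangleLift u t v) (triangleLift u t w) := by
  by_cases hvu : v = u
  · subst hvu
    obtain rfl := hv rfl
    rw [triangleLift_self, triangleLift_of_ne h.ne', triangleInsert_adj_inr_inl]
  by_cases hwu : w = u
  · subst hwu
    obtain rfl := hw rfl
    rw [triangleLift_self, triangleLift_of_ne h.ne, triangleInsert_adj_inl_inr]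
  simpa [triangleLift_of_ne hvu, triangleLift_of_ne hwu] using h

lemma exists_isMatchingOn_triangleInsert {S : Set V} {f : V → V}
    {T : Set ({v : V // v ≠ u} ⊕ Fin 3)} (t : Fin 3) (hf : G.IsMatchingOn S f)
    (hu : u ∈ S → f u = ![a, b, c] t) {x y : {v : V // v ≠ u} ⊕ Fin 3}
    (hxy : (triangleInsert G u a b c).Adj x y) (hx : x ∉ triangleLift u t '' S)
    (hy : y ∉ triangleLift u t '' S) (hT : T = triangleLift u t '' S ∪ {x, y}) :
    ∃ g, (triangleInsert G u a b c).IsMatchingOn T g := by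
  subst hT
  have hadj : ∀ v ∈ S,
      (triangleInsert G u a b c).Adj (triangleLift u t v) (triangleLift u t (f v)) := by
    intro v hv
    obtain ⟨hfv, hffv, hadj⟩ := hf v hv
    refine triangleInsert_adj_triangleLift hadj (fun h => ?_) fun h => ?_
    · rw [h] at hv ⊢
      exact hu hv
    · rw [h] at hfv
      rw [← hffv, h, hu hfv]
  obtain ⟨g, hg⟩ := hf.exists_image triangleLift_injective hadj
  exact hg.exists_union (isMatchingOn_pair hxy) (by simp [hx, hy])

lemma triangleInsert_induce_reachable_triangleLift (hN : G.neighborSet u = {a, b, c})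
    {T : Set ({v : V // v ≠ u} ⊕ Fin 3)} (hT : Sum.inr t ∈ T → ∀ r, Sum.inr r ∈ T)
    {v w : V} (h : G.Adj v w) (hv : triangleLift u t v ∈ T) (hw : triangleLift u t w ∈ T) :
    ((triangleInsert G u a b c).induce T).Reachable ⟨_, hv⟩ ⟨_, hw⟩ := by
  have from_u : ∀ {w} (h : G.Adj u w) (hu : triangleLift u t u ∈ T)
      (hw : triangleLift u t w ∈ T),
      ((triangleInsert G u a b c).induce T).Reachable ⟨_, hu⟩ ⟨_, hw⟩ := by
    intro w h hu hw
    obtain ⟨r, rfl⟩ := exists_eq_of_adj_of_neighborSet_eq hN h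
    have hu' : Sum.inr t ∈ T := by simpa using hu
    simp only [triangleLift_self, triangleLift_of_ne h.ne']
    exact (triangleInsert_induce_reachable_inr_inr hu' (hT hu' r)).trans (Adj.reachable (by simp))
  by_cases hvu : v = u
  · subst hvu
    exact from_u h hv hw
  by_cases hwu : w = u
  · subst hwu
    exact (from_u h.symm hw hv).symm
  exact Adj.reachable (by simpa [triangleLift_of_ne hvu, triangleLift_of_ne hwu] using h)

variable [Fintype V]

lemma triangleInsert_induce_compl_exists_reachable_triangleLift
    (hN : G.neighborSet u = {a, b, c}) (hinj : Function.Injective ![a, b, c])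
    {s : Set ({v : V // v ≠ u} ⊕ Fin 3)} (hs : s.ncard ≤ 2) {r : Fin 3} (ht : Sum.inr t ∈ s)
    (hr : Sum.inr r ∉ s) :
    ∃ v, ∃ hv : triangleLift u t v ∉ s,
      ((triangleInsert G u a b c).induce sᶜ).Reachable ⟨Sum.inr r, hr⟩ ⟨_, hv⟩ := by
  have hne : ∀ i, ![a, b, c] i ≠ u := fun i => (adj_of_neighborSet_eq hN i).ne'
  have hrt : r ≠ t := by
    rintro rfl
    exact hr ht
  by_cases hx : Sum.inl ⟨![a, b, c] r, hne r⟩ ∈ s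
  · obtain ⟨k, hk⟩ := Fin.exists_forall_eq_iff_ne_and_ne hrt
    obtain ⟨hkr, hkt⟩ := (hk k).mp rfl
    have hs_eq : s = {Sum.inr t, Sum.inl ⟨![a, b, c] r, hne r⟩} :=
      (Set.eq_of_subset_of_ncard_le (Set.insert_subset ht (Set.singleton_subset_iff.mpr hx))
        (by rwa [Set.ncard_pair (by simp)])).symm
    have hks : Sum.inr k ∉ s := by simp [hs_eq, hkt]
    refine ⟨![a, b, c] k, by simp [hs_eq, triangleLift_of_ne (hne k), hinj.ne hkr], ?_⟩
    refine (triangleInsert_induce_reachable_inr_inr hr hks).trans (Adj.reachable ?_)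
    simp [triangleLift_of_ne (hne k)]
  · exact ⟨![a, b, c] r, by rwa [triangleLift_of_ne (hne r)],
      Adj.reachable (by simp [triangleLift_of_ne (hne r)])⟩

lemma triangleInsert_induce_compl_connected (hN : G.neighborSet u = {a, b, c})
    (hinj : Function.Injective ![a, b, c]) (hG : ThreeConnected G)
    {s : Set ({v : V // v ≠ u} ⊕ Fin 3)} (hs : s.ncard ≤ 2) :
    ((triangleInsert G u a b c).induce sᶜ).Connected := by
  obtain ⟨t, ht⟩ : ∃ t : Fin 3, Sum.inr t ∉ s → ∀ r, Sum.inr r ∉ s := by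
    by_cases h : ∃ t, Sum.inr t ∈ s
    · exact h.imp fun t ht h => absurd ht h
    · exact ⟨0, fun _ r hr => h ⟨r, hr⟩⟩
  have hQ : (triangleLift u t ⁻¹' s).ncard ≤ 2 := by
    rw [← Set.ncard_image_of_injective _ triangleLift_injective]
    exact (Set.ncard_le_ncard (Set.image_preimage_subset _ _)).trans hs
  refine (hG.2 _ hQ).of_map_reachable (fun v => ⟨triangleLift u t v, v.2⟩)
    (fun v w h => triangleInsert_induce_reachable_triangleLift hN ht (induce_adj.mp h) _ _) ?_
  rintro ⟨v | r, hw⟩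
  · refine ⟨⟨v, by simpa using hw⟩, ?_⟩
    simp only [triangleLift_coe]
    rfl
  · by_cases hts : Sum.inr t ∈ s
    · obtain ⟨v, hv, h⟩ :=
        triangleInsert_induce_compl_exists_reachable_triangleLift hN hinj hs hts hw
      exact ⟨⟨v, hv⟩, h⟩
    · refine ⟨⟨u, by simpa using hts⟩, ?_⟩
      simp only [triangleLift_self]
      exact triangleInsert_induce_reachable_inr_inr hw hts

lemma IsBrick.exists_isMatchingOn_triangleInsert_inl_inr (hG : IsBrick G)
    (p : {v : V // v ≠ u}) (i : Fin 3) :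
    ∃ g, (triangleInsert G u a b c).IsMatchingOn {w | w ≠ Sum.inl p ∧ w ≠ Sum.inr i} g := by
  obtain ⟨f, hf⟩ := hG.exists_isMatchingOn (Ne.symm p.2)
  refine exists_isMatchingOn_triangleInsert i hf (fun h => absurd rfl h.1)
    (x := Sum.inr (i + 1)) (y := Sum.inr (i + 2)) (by simp) (by simp) (by simp) ?_
  ext (v | r)
  · simp [Subtype.ext_iff, v.2]
  · simp
    exact Fin.ne_iff_eq_add_one_or_eq_add_two

lemma IsBrick.exists_isMatchingOn_triangleInsert_inl_inl (hN : G.neighborSet u = {a, b, c})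
    (hG : IsBrick G) {p q : {v : V // v ≠ u}} (hpq : p ≠ q) :
    ∃ g, (triangleInsert G u a b c).IsMatchingOn {w | w ≠ Sum.inl p ∧ w ≠ Sum.inl q} g := by
  obtain ⟨f, hf⟩ := hG.exists_isMatchingOn (Subtype.coe_ne_coe.mpr hpq)
  have hu : u ∈ {v : V | v ≠ p ∧ v ≠ q} := ⟨Ne.symm p.2, Ne.symm q.2⟩
  obtain ⟨t, ht⟩ := exists_eq_of_adj_of_neighborSet_eq hN (hf u hu).2.2
  refine exists_isMatchingOn_triangleInsert t hf (fun _ => ht)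
    (x := Sum.inr (t + 1)) (y := Sum.inr (t + 2)) (by simp) (by simp) (by simp) ?_
  ext (v | r)
  · simp [Subtype.ext_iff]
  · rcases eq_or_ne r t with rfl | hrt
    · exact iff_of_true (by simp) (Or.inl ⟨u, hu, triangleLift_self⟩)
    · simpa [Ne.symm hrt] using Fin.ne_iff_eq_add_one_or_eq_add_two.mp hrt

lemma IsBrick.exists_isMatchingOn_triangleInsert_inr_inr (hN : G.neighborSet u = {a, b, c})
    (hG : IsBrick G) {i j : Fin 3} (hij : i ≠ j) :
    ∃ g, (triangleInsert G u a b c).IsMatchingOn {w | w ≠ Sum.inr i ∧ w ≠ Sum.inr j} g := by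
  obtain ⟨k, hk⟩ := Fin.exists_forall_eq_iff_ne_and_ne hij
  have hku := (adj_of_neighborSet_eq hN k).ne
  obtain ⟨f, hf⟩ := hG.exists_isMatchingOn hku
  refine exists_isMatchingOn_triangleInsert k hf (fun h => absurd rfl h.1)
    (x := Sum.inr k) (y := Sum.inl ⟨![a, b, c] k, hku.symm⟩) (by simp) (by simp) (by simp) ?_
  ext (v | r)
  · simp [Subtype.ext_iff]
    exact (em _).imp_right fun h => ⟨v.2, h⟩
  · simp
    exact (hk r).symm

end TriangleInsert

/-- If `G` is a brick and `u` is a vertex of degree 3 in `G` with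
neighbors `a`, `b`, `c`, then the triangle-insertion `G⟨u⟩` is also a brick. -/
theorem stmt0 {V : Type*} [Fintype V] [DecidableEq V] (G : SimpleGraph V)
    (u a b c : V) (hab : a ≠ b) (hac : a ≠ c) (hbc : b ≠ c)
    (hN : G.neighborSet u = {a, b, c})
    (hG : IsBrick G) :
    IsBrick (triangleInsert G u a b c) := by
  have hinj : Function.Injective ![a, b, c] :=
    Fin.cons_injective_iff.mpr ⟨by simp [hab, hac], injective_pair_iff_ne.mpr hbc⟩
  have hcard : 4 ≤ Fintype.card ({v : V // v ≠ u} ⊕ Fin 3) := by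
    have := hG.1.1
    simp only [Fintype.card_sum, Fintype.card_fin, Fintype.card_subtype_compl,
      Fintype.card_unique]
    omega
  refine ⟨⟨hcard, fun s hs => triangleInsert_induce_compl_connected hN hinj hG.1 hs⟩,
    fun x y hxy => exists_isPerfectMatching_induce_iff.mpr ?_⟩
  rcases x with p | i <;> rcases y with q | j
  · exact hG.exists_isMatchingOn_triangleInsert_inl_inl hN (by simpa using hxy)
  · exact hG.exists_isMatchingOn_triangleInsert_inl_inr p j
  · simpa only [and_comm] using
      hG.exists_isMatchingOn_triangleInsert_inl_inr (a := a) (b := b) (c := c) q i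
  · exact hG.exists_isMatchingOn_triangleInsert_inr_inr hN (by simpa using hxy)
end

section
/- The graph G_0, obtained from the wheel W_5 (with hub u and rim cycle v_1 v_2 v_3 v_4 v_5) by performing triangle-insertions at the four rim vertices v_1, v_2, v_3, v_4, is a brick on 14 vertices with 22 edges. -/
/-!
Both defining properties of a brick are finite checks on the 14-vertex graph `G₀`, settled by
computation. Connectivity of `G₀ - s` is witnessed by a depth-first search along an adjacency
list that reaches every remaining vertex, and a perfect matching of `G₀ - x - y` by a fixed-point
free involution along edges, found among the candidates that pair each vertex with a neighbour.
Only the soundness of these witnesses is proved: nothing depends on the searches being complete.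
-/

open SimpleGraph

/-- The graph `G₀` obtained from the wheel `W₅` (hub `u`, rim `v₁ v₂ v₃ v₄ v₅`) by
triangle-insertions at the four rim vertices `v₁, v₂, v₃, v₄`.
Labels: `0` is the hub `u`, `1` is the remaining rim vertex `v₅`, and for
`i = 1, 2, 3, 4` the `i`-th inserted triangle has vertices `3i - 1, 3i, 3i + 1`,
where `3i - 1` is adjacent to the hub, and the rim connections are
`1–3, 4–6, 7–9, 10–12, 13–1`. -/
def G0 : SimpleGraph (Fin 14) :=
  SimpleGraph.fromEdgeSet
    {s(0, 1), s(0, 2), s(0, 5), s(0, 8), s(0, 11),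
     s(2, 3), s(3, 4), s(2, 4),
     s(5, 6), s(6, 7), s(5, 7),
     s(8, 9), s(9, 10), s(8, 10),
     s(11, 12), s(12, 13), s(11, 13),
     s(1, 3), s(4, 6), s(7, 9), s(10, 12), s(13, 1)}

namespace AdjList

variable {V : Type*} [DecidableEq V]

/-- Each vertex is expanded once and pushes at most `|V|` vertices, so fuel `|V| ^ 2` lets the
search run until the stack is empty. -/
def dfs (nbrs : V → List V) (S : Set V) [DecidablePred (· ∈ S)] : ℕ → List V → List V → List V
  | 0, _, visited => visited
  | _, [], visited => visited
  | n + 1, v :: stack, visited =>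
      if v ∈ visited then dfs nbrs S n stack visited
      else dfs nbrs S n ((nbrs v).filter (· ∈ S) ++ stack) (v :: visited)

theorem forall_mem_dfs {nbrs : V → List V} {S : Set V} [DecidablePred (· ∈ S)] {P : V → Prop}
    (hP : ∀ u, P u → ∀ w ∈ nbrs u, w ∈ S → P w) :
    ∀ (n : ℕ) (stack visited : List V), (∀ v ∈ stack, P v) → (∀ v ∈ visited, P v) →
      ∀ v ∈ dfs nbrs S n stack visited, P v
  | 0, _, _, _, hvisited => by simpa only [dfs] using hvisited
  | _ + 1, [], _, _, hvisited => by simpa only [dfs] using hvisited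
  | n + 1, u :: stack, visited, hstack, hvisited => by
    have hu : P u := hstack u List.mem_cons_self
    have hstack' : ∀ v ∈ stack, P v := fun v hv => hstack v (List.mem_cons_of_mem u hv)
    rw [dfs]
    split_ifs
    · exact forall_mem_dfs hP n stack visited hstack' hvisited
    · refine forall_mem_dfs hP n _ _ ?_ ?_
      · simp only [List.mem_append, List.mem_filter, decide_eq_true_eq]
        rintro v (⟨hv, hvS⟩ | hv)
        exacts [hP u hu v hv hvS, hstack' v hv]
      · simp only [List.mem_cons]
        rintro v (rfl | hv)
        exacts [hu, hvisited v hv]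

theorem induce_connected_of_dfs {G : SimpleGraph V} {nbrs : V → List V}
    (hnbrs : ∀ u, ∀ v ∈ nbrs u, G.Adj u v) {S : Set V} [DecidablePred (· ∈ S)] {n : ℕ}
    (h : ∃ r ∈ S, ∀ v ∈ S, v ∈ dfs nbrs S n [r] []) : (G.induce S).Connected := by
  obtain ⟨r, hr, hS⟩ := h
  let P (v : V) : Prop := ∃ hv : v ∈ S, (G.induce S).Reachable ⟨r, hr⟩ ⟨v, hv⟩
  have hP : ∀ u, P u → ∀ w ∈ nbrs u, w ∈ S → P w := by
    rintro u ⟨hu, hru⟩ w hw hwS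
    have hadj : (G.induce S).Adj ⟨u, hu⟩ ⟨w, hwS⟩ := hnbrs u w hw
    exact ⟨hwS, hru.trans hadj.reachable⟩
  have hreach := forall_mem_dfs hP n [r] [] (by simp [P, hr]) (by simp)
  refine (connected_iff_exists_forall_reachable _).mpr ⟨⟨r, hr⟩, fun ⟨v, hv⟩ => ?_⟩
  obtain ⟨_, h⟩ := hreach v (hS v hv)
  exact h

def matchings (nbrs : V → List V) : ℕ → List V → List (V → V)
  | _, [] => [id]
  | 0, _ :: _ => []
  | n + 1, v :: rest => ((nbrs v).filter (· ∈ rest)).flatMap fun w =>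
      (matchings nbrs n (rest.erase w)).map fun f u =>
        if u = v then w else if u = w then v else f u

end AdjList

theorem SimpleGraph.exists_isPerfectMatching_induce_of_involution {V : Type*}
    {G : SimpleGraph V} {S : Set V} (f : V → V)
    (hf : ∀ v ∈ S, f v ∈ S ∧ f (f v) = v ∧ G.Adj v (f v)) :
    ∃ M : (G.induce S).Subgraph, M.IsPerfectMatching := by
  refine ⟨{ verts := Set.univ
            Adj := fun a b => f a = b
            adj_sub := ?_
            edge_vert := fun _ => trivial
            symm := ⟨fun a b hab => ?_⟩ }, ?_⟩
  · rintro ⟨a, ha⟩ ⟨b, hb⟩ (rfl : f a = b)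
    exact (hf a ha).2.2
  · obtain ⟨a, ha⟩ := a
    obtain ⟨b, hb⟩ := b
    change f a = b at hab
    change f b = a
    rw [← hab, (hf a ha).2.1]
  · rw [Subgraph.isPerfectMatching_iff]
    rintro ⟨v, hv⟩
    exact ⟨⟨f v, (hf v hv).1⟩, rfl, fun w (hw : f v = w) => Subtype.ext hw.symm⟩

theorem Set.eq_empty_or_exists_eq_pair_of_ncard_le_two {α : Type*} {s : Set α} (hs : s.Finite)
    (h : s.ncard ≤ 2) : s = ∅ ∨ ∃ x y, s = {x, y} := by
  obtain h0 | h1 | h2 : s.ncard = 0 ∨ s.ncard = 1 ∨ s.ncard = 2 := by omega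
  · exact .inl ((Set.ncard_eq_zero hs).mp h0)
  · obtain ⟨x, rfl⟩ := Set.ncard_eq_one.mp h1
    exact .inr ⟨x, x, by simp⟩
  · obtain ⟨x, y, -, rfl⟩ := Set.ncard_eq_two.mp h2
    exact .inr ⟨x, y, rfl⟩

def G0Neighbors : Fin 14 → List (Fin 14)
  | 0 => [1, 2, 5, 8, 11]
  | 1 => [0, 3, 13]
  | 2 => [0, 3, 4]
  | 3 => [1, 2, 4]
  | 4 => [2, 3, 6]
  | 5 => [0, 6, 7]
  | 6 => [4, 5, 7]
  | 7 => [5, 6, 9]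
  | 8 => [0, 9, 10]
  | 9 => [7, 8, 10]
  | 10 => [8, 9, 12]
  | 11 => [0, 12, 13]
  | 12 => [10, 11, 13]
  | 13 => [1, 11, 12]

instance : DecidableRel G0.Adj := fun _ _ => by unfold G0; infer_instance

theorem G0_adj_of_mem_G0Neighbors : ∀ u, ∀ v ∈ G0Neighbors u, G0.Adj u v := by
  decide +kernel

theorem G0_induce_compl_connected {s : Set (Fin 14)} (hs : s.ncard ≤ 2) :
    (G0.induce sᶜ).Connected := by
  have hpair : ∀ a b : Fin 14, ∃ r ∈ ({a, b} : Set (Fin 14))ᶜ, ∀ v ∈ ({a, b} : Set (Fin 14))ᶜ,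
      v ∈ AdjList.dfs G0Neighbors ({a, b} : Set (Fin 14))ᶜ (14 ^ 2) [r] [] := by
    decide +kernel
  obtain rfl | ⟨x, y, rfl⟩ := s.eq_empty_or_exists_eq_pair_of_ncard_le_two s.toFinite hs
  · exact AdjList.induce_connected_of_dfs (n := 14 ^ 2) G0_adj_of_mem_G0Neighbors
      (by decide +kernel)
  · exact AdjList.induce_connected_of_dfs G0_adj_of_mem_G0Neighbors (hpair x y)

theorem G0_exists_isPerfectMatching_induce (x y : Fin 14) (hxy : x ≠ y) :
    ∃ M : (G0.induce {v | v ≠ x ∧ v ≠ y}).Subgraph, M.IsPerfectMatching := by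
  have hsearch : ∀ a b : Fin 14, a ≠ b → ∃ f ∈ AdjList.matchings G0Neighbors 14
      ((List.finRange 14).filter fun v => v ≠ a ∧ v ≠ b), ∀ v, v ≠ a ∧ v ≠ b →
        (f v ≠ a ∧ f v ≠ b) ∧ f (f v) = v ∧ f v ∈ G0Neighbors v := by
    decide +kernel
  obtain ⟨f, -, hf⟩ := hsearch x y hxy
  refine exists_isPerfectMatching_induce_of_involution f fun v hv => ?_
  obtain ⟨hfv, hff, hadj⟩ := hf v hv
  exact ⟨hfv, hff, G0_adj_of_mem_G0Neighbors v _ hadj⟩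

theorem G0_edgeSet_ncard : G0.edgeSet.ncard = 22 := by
  rw [← coe_edgeFinset, Set.ncard_coe_finset]
  decide +kernel

/-- `G₀` is a brick on 14 vertices with 22 edges. -/
theorem stmt2 : IsBrick G0 ∧ Fintype.card (Fin 14) = 14 ∧ G0.edgeSet.ncard = 22 :=
  ⟨⟨⟨by decide, fun _ => G0_induce_compl_connected⟩, G0_exists_isPerfectMatching_induce⟩,
    Fintype.card_fin 14, G0_edgeSet_ncard⟩
end

section
/- Let G_0 be the graph obtained from the wheel W_5 (with hub u and rim cycle v_1 v_2 v_3 v_4 v_5) by performing triangle-insertions at the four rim vertices v_1, v_2, v_3, v_4. For every neighbor v of u in G_0: if v lies in a triangle of G_0 (i.e., v is a vertex of one of the four inserted triangles), then G_0 − {u, v} has exactly two perfect matchings; otherwise (i.e., v = v_5), G_0 − {u, v} has exactly one perfect matching. -/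
open SimpleGraph

/-!
A perfect matching of an induced subgraph `G[S]` is the same as an involution of the vertex type
that fixes everything outside `S` and sends each vertex of `S` to a neighbour in `S`. For `x ∉ S`,
composing with the transposition `(x y)` turns the involutions on `S ∪ {x}` with `x ↦ y` into
those on `S \ {y}`, which gives the expansion
`numPM G[S ∪ {x}] = ∑_{y ∈ S, x ~ y} numPM G[S \ {y}]`.
Unfolding it along a list of the vertices gives a count that the kernel evaluates for the five
neighbours of the hub of `G₀`.
-/

namespace SimpleGraph

variable {V W : Type*}

namespace Subgraph.IsPerfectMatching

variable {H : SimpleGraph W} {M : H.Subgraph} (hM : M.IsPerfectMatching)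

noncomputable def partner (w : W) : W :=
  (isPerfectMatching_iff.mp hM w).choose

theorem adj_partner (w : W) : M.Adj w (hM.partner w) :=
  (isPerfectMatching_iff.mp hM w).choose_spec.1

theorem partner_eq_iff {v w : W} : hM.partner v = w ↔ M.Adj v w :=
  ⟨fun h => h ▸ hM.adj_partner v,
    fun h => ((isPerfectMatching_iff.mp hM v).choose_spec.2 w h).symm⟩

theorem partner_involutive : Function.Involutive hM.partner := fun w =>
  (hM.partner_eq_iff).2 (hM.adj_partner w).symm

end Subgraph.IsPerfectMatching

def subgraphOfInvolutive (H : SimpleGraph W) (f : W → W) (hf : Function.Involutive f)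
    (hadj : ∀ w, H.Adj w (f w)) : H.Subgraph where
  verts := Set.univ
  Adj a b := f a = b
  adj_sub h := h ▸ hadj _
  edge_vert _ := trivial
  symm := ⟨fun a _ h => h ▸ hf a⟩

theorem isPerfectMatching_subgraphOfInvolutive (H : SimpleGraph W) {f : W → W}
    (hf : Function.Involutive f) (hadj : ∀ w, H.Adj w (f w)) :
    (H.subgraphOfInvolutive f hf hadj).IsPerfectMatching :=
  Subgraph.isPerfectMatching_iff.mpr fun v => ⟨f v, rfl, fun _ h => Eq.symm h⟩

noncomputable def perfectMatchingEquivInvolutive (H : SimpleGraph W) :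
    {M : H.Subgraph // M.IsPerfectMatching} ≃
      {f : W → W // Function.Involutive f ∧ ∀ w, H.Adj w (f w)} where
  toFun M := ⟨M.2.partner, M.2.partner_involutive, fun w => M.1.adj_sub (M.2.adj_partner w)⟩
  invFun f := ⟨H.subgraphOfInvolutive f.1 f.2.1 f.2.2,
    H.isPerfectMatching_subgraphOfInvolutive f.2.1 f.2.2⟩
  left_inv M := Subtype.ext <| Subgraph.ext (Set.eq_univ_of_forall M.2.2).symm <|
    funext₂ fun _ _ => propext M.2.partner_eq_iff
  right_inv f := Subtype.ext <| funext fun _ =>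
    (H.isPerfectMatching_subgraphOfInvolutive f.2.1 f.2.2).partner_eq_iff.2 rfl

def IsPartnerMap (G : SimpleGraph V) (S : Set V) (f : V → V) : Prop :=
  Function.Involutive f ∧ (∀ x ∈ S, f x ∈ S ∧ G.Adj x (f x)) ∧ ∀ x ∉ S, f x = x

open Classical in
noncomputable def involutiveEquivPartnerMap (G : SimpleGraph V) (S : Set V) :
    {f : S → S // Function.Involutive f ∧ ∀ w, (G.induce S).Adj w (f w)} ≃
      {f : V → V // G.IsPartnerMap S f} where
  toFun f := ⟨fun v => if h : v ∈ S then f.1 ⟨v, h⟩ else v, by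
    refine ⟨fun v => ?_, fun v hv => ?_, fun v hv => dif_neg hv⟩
    · by_cases hv : v ∈ S
      · simp [hv, f.2.1 ⟨v, hv⟩]
      · simp [hv]
    · simpa [hv] using f.2.2 ⟨v, hv⟩⟩
  invFun g := ⟨fun w => ⟨g.1 w, (g.2.2.1 w w.2).1⟩,
    fun w => Subtype.ext (g.2.1 w), fun w => (g.2.2.1 w w.2).2⟩
  left_inv f := by ext; simp
  right_inv g := by
    ext v
    by_cases hv : v ∈ S
    · simp [hv]
    · simp [hv, g.2.2.2 v hv]

section swap

variable [DecidableEq V] {G : SimpleGraph V} {S : Set V} {x y : V}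

open Equiv

theorem IsPartnerMap.swap_comp {f : V → V} (hf : G.IsPartnerMap (insert x S) f) (hx : x ∉ S) :
    G.IsPartnerMap (S \ {f x}) (swap x (f x) ∘ f) := by
  obtain ⟨hinv, hmem, hfix⟩ := hf
  have hfx : f x ≠ x := (hmem x (Set.mem_insert x S)).2.ne.symm
  refine ⟨fun z => ?_, fun z hz => ?_, fun z hz => ?_⟩ <;>
    simp only [Function.comp_apply, swap_apply_def]
  · grind [hinv z, hinv x]
  · grind [hinv z, hinv x, hmem z (Set.mem_insert_of_mem x hz.1)]
  · grind [hinv x]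

theorem IsPartnerMap.swap_comp_of_sdiff {g : V → V} (hg : G.IsPartnerMap (S \ {y}) g)
    (hx : x ∉ S) (hy : y ∈ S) (hxy : G.Adj x y) :
    G.IsPartnerMap (insert x S) (swap x y ∘ g) := by
  obtain ⟨hinv, hmem, hfix⟩ := hg
  have hgx : g x = x := hfix x (fun h => hx h.1)
  have hgy : g y = y := hfix y (fun h => h.2 rfl)
  refine ⟨fun z => ?_, fun z hz => ?_, fun z hz => ?_⟩ <;>
    simp only [Function.comp_apply, swap_apply_def]
  · grind [hinv z]
  · grind [hinv z, G.adj_symm]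
  · grind

variable (G) [DecidableRel G.Adj]

def partnerMapInsertEquiv {S : Finset V} (hx : x ∉ S) :
    {f // G.IsPartnerMap ↑(insert x S) f} ≃
      Σ y : S.filter (G.Adj x), {g // G.IsPartnerMap ↑(S.erase y) g} where
  toFun f :=
    have hf : G.IsPartnerMap (insert x ↑S) f.1 := by simpa using f.2
    ⟨⟨f.1 x, by
        obtain ⟨hfxS, hadj⟩ := hf.2.1 x (Set.mem_insert x _)
        simpa [hadj, hadj.ne'] using hfxS⟩,
      swap x (f.1 x) ∘ f.1, by simpa using hf.swap_comp (by simpa using hx)⟩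
  invFun p := ⟨swap x p.1 ∘ p.2.1, by
    have hy := Finset.mem_filter.mp p.1.2
    simpa using (show G.IsPartnerMap (↑S \ {↑p.1}) p.2.1 by simpa using p.2.2).swap_comp_of_sdiff
      (by simpa using hx) hy.1 hy.2⟩
  left_inv f := by ext; simp
  right_inv p := by
    have hgx : p.2.1 x = x := p.2.2.2.2 x (by simp [hx])
    refine Sigma.subtype_ext (Subtype.ext ?_) ?_
    · simp [hgx]
    · ext; simp [hgx]

end swap

section count

variable (G : SimpleGraph V)

theorem numPM_induce_eq_card (S : Set V) :
    numPM (G.induce S) = Nat.card {f // G.IsPartnerMap S f} := by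
  rw [numPM, ← Nat.card_coe_set_eq]
  exact Nat.card_congr ((perfectMatchingEquivInvolutive _).trans (involutiveEquivPartnerMap G S))

instance (S : Finset V) : Finite {f // G.IsPartnerMap S f} :=
  .of_equiv _ ((perfectMatchingEquivInvolutive _).trans (involutiveEquivPartnerMap G S))

theorem numPM_induce_empty : numPM (G.induce ∅) = 1 := by
  rw [numPM_induce_eq_card, Nat.card_eq_one_iff_unique]
  refine ⟨⟨fun f g => Subtype.ext (funext fun v => ?_)⟩,
    ⟨⟨id, fun _ => rfl, by simp, fun _ _ => rfl⟩⟩⟩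
  rw [f.2.2.2 v (Set.notMem_empty v), g.2.2.2 v (Set.notMem_empty v)]

variable [DecidableEq V] [DecidableRel G.Adj]

theorem numPM_induce_insert {S : Finset V} {x : V} (hx : x ∉ S) :
    numPM (G.induce ↑(insert x S)) = ∑ y ∈ S with G.Adj x y, numPM (G.induce ↑(S.erase y)) := by
  simp only [numPM_induce_eq_card]
  rw [Nat.card_congr (G.partnerMapInsertEquiv hx), Nat.card_sigma]
  exact Finset.sum_coe_sort _ fun y => Nat.card {g // G.IsPartnerMap ↑(S.erase y) g}

def pmCount : List V → Finset V → ℕ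
  | [], _ => 1
  | x :: l, U =>
    if x ∈ U then pmCount l U
    else ((l.filter fun y => G.Adj x y ∧ y ∉ U).map fun y => pmCount l (insert y U)).sum

theorem pmCount_eq_numPM {l : List V} (hl : l.Nodup) (U : Finset V) :
    G.pmCount l U = numPM (G.induce ↑(l.toFinset \ U)) := by
  induction l generalizing U with
  | nil => rw [pmCount, List.toFinset_nil, Finset.empty_sdiff, Finset.coe_empty, numPM_induce_empty]
  | cons x l ih =>
    obtain ⟨hxl, hl⟩ := List.nodup_cons.mp hl
    by_cases hxU : x ∈ U
    · rw [pmCount, if_pos hxU, ih hl, List.toFinset_cons, Finset.insert_sdiff_of_mem _ hxU]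
    · rw [pmCount, if_neg hxU, List.toFinset_cons, Finset.insert_sdiff_of_notMem _ hxU,
        numPM_induce_insert G (by simp [hxl]), ← List.sum_toFinset _ (hl.filter _)]
      refine Finset.sum_congr (by ext; simp; tauto) fun y _ => ?_
      rw [ih hl, Finset.sdiff_insert]

end count

end SimpleGraph

instance inst_s4 : DecidableRel G0.Adj := by
  unfold G0
  exact fun a b => decidable_of_iff' _ (fromEdgeSet_adj _)

/-- For every neighbor `v` of the hub `u = 0` of `G₀`: if `v` lies in a
triangle of `G₀`, then `G₀ − {u, v}` has exactly two perfect matchings; otherwise,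
`G₀ − {u, v}` has exactly one perfect matching. -/
theorem stmt4 :
    ∀ v : Fin 14, G0.Adj 0 v →
      ((∃ w x : Fin 14, G0.Adj v w ∧ G0.Adj w x ∧ G0.Adj x v) →
        numPM (G0.induce {z : Fin 14 | z ≠ 0 ∧ z ≠ v}) = 2) ∧
      (¬ (∃ w x : Fin 14, G0.Adj v w ∧ G0.Adj w x ∧ G0.Adj x v) →
        numPM (G0.induce {z : Fin 14 | z ≠ 0 ∧ z ≠ v}) = 1) := by
  have hcount (v : Fin 14) :
      numPM (G0.induce {z | z ≠ 0 ∧ z ≠ v}) = G0.pmCount (List.finRange 14) {0, v} := by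
    have hS : (↑((List.finRange 14).toFinset \ {0, v}) : Set (Fin 14)) = {z | z ≠ 0 ∧ z ≠ v} := by
      ext z
      simp [and_comm]
    rw [G0.pmCount_eq_numPM (List.nodup_finRange 14), hS]
  simp only [hcount]
  decide
end

section
/- For every even integer n ≥ 18 with n ≡ 6 (mod 8), writing n = 6 + 8(t+1) with t ≥ 1, the edge u u' is a solitary edge of G''_n = G'_t⟨S_3⟩; that is, the edge joining u and u' lies in exactly one perfect matching of G''_n. Equivalently, G''_n − {u, u'} has exactly one perfect matching. -/
open SimpleGraph

/-- The set `S = {u₀¹, u₀³, u} ∪ {uₛ², uₛ⁴ : 0 ≤ s ≤ t}` of vertices of `G_t`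
(here `Sum.inl (s, j)` is the vertex `u_s^{j+1}` and `Sum.inr false` is `u`;
`Sum.inr true` will be the extra vertex `u'` of `G'_t`). -/
def Sset (t : ℕ) : Set ((Fin (t + 1) × Fin 4) ⊕ Bool) :=
  {p | p = Sum.inl (0, 0) ∨ p = Sum.inl (0, 2) ∨ p = Sum.inr false ∨
       ∃ s : Fin (t + 1), p = Sum.inl (s, 1) ∨ p = Sum.inl (s, 3)}

/-- The graph `G'_t`: the vertex `Sum.inl (s, j)` is `u_s^{j+1}`, `Sum.inr false` is `u`
and `Sum.inr true` is `u'`.  The edges are the path edges `u_s^1 u_s^2 u_s^3 u_s^4`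
for `0 ≤ s ≤ t`, the edges `u_s^1 u_{s+1}^1` and `u_s^4 u_{s+1}^3` for `0 ≤ s ≤ t−1`,
the edges `u u_t^1` and `u u_t^4`, and the edges from `u'` to every vertex of `S`. -/
def G't (t : ℕ) : SimpleGraph ((Fin (t + 1) × Fin 4) ⊕ Bool) :=
  SimpleGraph.fromRel (fun p q =>
    (∃ (s : Fin (t + 1)) (j j' : Fin 4), (j' : ℕ) = (j : ℕ) + 1 ∧
        p = Sum.inl (s, j) ∧ q = Sum.inl (s, j')) ∨
    (∃ s s' : Fin (t + 1), (s' : ℕ) = (s : ℕ) + 1 ∧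
        ((p = Sum.inl (s, 0) ∧ q = Sum.inl (s', 0)) ∨
         (p = Sum.inl (s, 3) ∧ q = Sum.inl (s', 2)))) ∨
    (p = Sum.inl (Fin.last t, 0) ∧ q = Sum.inr false) ∨
    (p = Sum.inl (Fin.last t, 3) ∧ q = Sum.inr false) ∨
    (p ∈ Sset t ∧ q = Sum.inr true))

/-- The sets `S₁ = S \ {u_t², u_t⁴, u}`, `S₂ = S \ {u_t⁴, u}`, `S₃ = S \ {u}`, `S₄ = S`. -/
def Ssub (t : ℕ) : ℕ → Set ((Fin (t + 1) × Fin 4) ⊕ Bool)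
  | 1 => Sset t \ {Sum.inl (Fin.last t, 1), Sum.inl (Fin.last t, 3), Sum.inr false}
  | 2 => Sset t \ {Sum.inl (Fin.last t, 3), Sum.inr false}
  | 3 => Sset t \ {Sum.inr false}
  | _ => Sset t

/-- Vertices of the graph obtained from `G` by simultaneous triangle-insertions at all
vertices of `S'`: a vertex is either `(v, none)` for an untouched vertex `v ∉ S'`, or
`(v, some w)` for `v ∈ S'` and `w` a neighbor of `v`, the triangle vertex of `v`
facing `w`.  (When every vertex of `S'` has degree 3, each `v ∈ S'` is replaced by
a triangle whose vertex facing `w` is joined to `w`.) -/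
abbrev ExpandVerts {V : Type*} (G : SimpleGraph V) (S' : Set V) : Type _ :=
  {p : V × Option V //
    (p.1 ∉ S' ∧ p.2 = none) ∨ (p.1 ∈ S' ∧ ∃ w, p.2 = some w ∧ G.Adj p.1 w)}

noncomputable instance expandVertsFintype {V : Type*} [Fintype V] (G : SimpleGraph V)
    (S' : Set V) : Fintype (ExpandVerts G S') := by
  classical exact Subtype.fintype _

/-- The graph obtained from `G` by triangle-insertions at all vertices of `S'`:
two untouched vertices are adjacent iff they were adjacent in `G`; the triangle
vertex of `v` facing `w` is adjacent to the other two triangle vertices of `v`,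
and to `w` (to the triangle vertex of `w` facing `v`, if `w ∈ S'`). -/
def expand {V : Type*} (G : SimpleGraph V) (S' : Set V) :
    SimpleGraph (ExpandVerts G S') :=
  SimpleGraph.fromRel (fun p q =>
    (p.1.2 = none ∧ q.1.2 = none ∧ G.Adj p.1.1 q.1.1) ∨
    (p.1.2 = none ∧ q.1.2 = some p.1.1) ∨
    (∃ w w' : V, p.1.2 = some w ∧ q.1.2 = some w' ∧
      ((p.1.1 = q.1.1 ∧ w ≠ w') ∨ (q.1.1 = w ∧ p.1.1 = w'))))

/-- The vertex `u` of `G''_n = G'_t⟨S₃⟩` (it is not inserted, since `u ∉ S₃`). -/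
def uVert (t : ℕ) : ExpandVerts (G't t) (Ssub t 3) :=
  ⟨(Sum.inr false, none), Or.inl ⟨by simp [Ssub], rfl⟩⟩

/-- The vertex `u'` of `G''_n = G'_t⟨S₃⟩` (it is not inserted, since `u' ∉ S`). -/
def u'Vert3 (t : ℕ) : ExpandVerts (G't t) (Ssub t 3) :=
  ⟨(Sum.inr true, none), Or.inl ⟨by simp [Ssub, Sset], rfl⟩⟩

/-!
Delete `u` and `u'`; every remaining vertex lies over some `u_s^j`, and the graph is peeled
level by level from `s = t` down to `0`. In the triangle at `u_s^4` two corners have lost their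
outer neighbours (`u'`, and `u_{s+1}^3` or `u`), so every perfect matching pairs them and then
matches the third corner to `u_s^3`. After removing these, the triangle at `u_s^2` is in the same
position with respect to `u_s^1`. At level `0` the four triangles form a chain which is peeled from
both ends in the same way. Removing a forced edge does not change the number of perfect matchings,
and the empty graph has exactly one.
-/

namespace SimpleGraph

variable {V : Type*} {G : SimpleGraph V}

namespace Subgraph

variable {M N : G.Subgraph} {x y : V}

theorem IsMatching.deleteVerts_pair (hM : M.IsMatching) (h : M.Adj x y) :
    (M.deleteVerts {x, y}).IsMatching := by
  rintro v ⟨hv, hvxy⟩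
  obtain ⟨w, hvw, hw⟩ := hM hv
  have hwxy : w ∉ ({x, y} : Set V) := by
    rintro (rfl | rfl)
    · exact hvxy (Or.inr (hM.eq_of_adj_left hvw.symm h))
    · exact hvxy (Or.inl (hM.eq_of_adj_right hvw h))
  exact ⟨w, deleteVerts_adj.mpr ⟨hv, hvxy, hvw.snd_mem, hwxy, hvw⟩,
    fun w' hw' => hw w' (deleteVerts_adj.mp hw').2.2.2.2⟩

theorem IsMatching.deleteVerts_sup_subgraphOfAdj (hM : M.IsMatching) (h : M.Adj x y) :
    M.deleteVerts {x, y} ⊔ G.subgraphOfAdj (M.adj_sub h) = M := by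
  refine le_antisymm (sup_le deleteVerts_le (subgraphOfAdj_le_of_adj M h)) ⟨?_, ?_⟩
  · intro v hv
    by_cases hvxy : v ∈ ({x, y} : Set V)
    · rcases hvxy with rfl | rfl <;> simp
    · exact Or.inl ⟨hv, hvxy⟩
  · intro a b hab
    by_cases hxy : a ∈ ({x, y} : Set V) ∨ b ∈ ({x, y} : Set V)
    · right
      rcases hxy with (rfl | rfl) | (rfl | rfl)
      · simp [hM.eq_of_adj_left hab h]
      · simp [hM.eq_of_adj_left hab h.symm, Sym2.eq_swap]
      · simp [hM.eq_of_adj_right hab h.symm, Sym2.eq_swap]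
      · simp [hM.eq_of_adj_right hab h]
    · simp only [not_or] at hxy
      exact Or.inl (deleteVerts_adj.mpr ⟨hab.fst_mem, hxy.1, hab.snd_mem, hxy.2, hab⟩)

theorem IsMatching.sup_subgraphOfAdj (hxy : G.Adj x y) (hN : N.IsMatching) (hx : x ∉ N.verts)
    (hy : y ∉ N.verts) :
    (N ⊔ G.subgraphOfAdj hxy).IsMatching := by
  refine hN.sup (IsMatching.subgraphOfAdj hxy) ?_
  rw [hN.support_eq_verts, support_subgraphOfAdj, Set.disjoint_insert_right,
    Set.disjoint_singleton_right]
  exact ⟨hx, hy⟩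

theorem sup_subgraphOfAdj_deleteVerts (hxy : G.Adj x y) (hx : x ∉ N.verts) (hy : y ∉ N.verts) :
    (N ⊔ G.subgraphOfAdj hxy).deleteVerts {x, y} = N := by
  ext a b
  · simp only [deleteVerts_verts, verts_sup, subgraphOfAdj_verts, Set.mem_sdiff,
      Set.mem_union, Set.mem_insert_iff, Set.mem_singleton_iff]
    constructor
    · rintro ⟨h | h, hab⟩
      · exact h
      · exact absurd h hab
    · intro ha
      exact ⟨Or.inl ha, by rintro (rfl | rfl) <;> contradiction⟩
  · simp only [deleteVerts_adj, sup_adj, subgraphOfAdj_adj, verts_sup]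
    constructor
    · rintro ⟨-, ha, -, -, h | h⟩
      · exact h
      · rw [Sym2.eq_iff] at h
        rcases h with ⟨rfl, rfl⟩ | ⟨rfl, rfl⟩ <;> simp at ha
    · intro h
      have ha : a ∉ ({x, y} : Set V) := by rintro (rfl | rfl) <;> exact ‹_ ∉ _› h.fst_mem
      have hb : b ∉ ({x, y} : Set V) := by rintro (rfl | rfl) <;> exact ‹_ ∉ _› h.snd_mem
      exact ⟨Or.inl h.fst_mem, ha, Or.inl h.snd_mem, hb, Or.inl h⟩

theorem comap_map_of_injective {W : Type*} {G' : SimpleGraph W} {f : G →g G'}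
    (hf : Function.Injective f) (H : G.Subgraph) : (H.map f).comap f = H := by
  ext a b
  · simp [hf.mem_set_image]
  · simp only [comap_adj, map_adj, Relation.Map, hf.eq_iff]
    exact ⟨fun ⟨_, _, _, h, rfl, rfl⟩ => h, fun h => ⟨H.adj_sub h, a, b, h, rfl, rfl⟩⟩

end Subgraph

def matchingsOn (G : SimpleGraph V) (A : Set V) : Set G.Subgraph :=
  {M | M.verts = A ∧ M.IsMatching}

theorem matchingsOn_empty : G.matchingsOn ∅ = {⊥} := by
  ext M
  refine ⟨fun ⟨hM, _⟩ => M.eq_bot_iff_verts_eq_empty.mpr hM, ?_⟩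
  rintro rfl
  exact ⟨rfl, fun v hv => hv.elim⟩

theorem ncard_matchingsOn_adj {A : Set V} {x y : V} (hxy : G.Adj x y) (hx : x ∈ A)
    (hy : y ∈ A) :
    {M ∈ G.matchingsOn A | M.Adj x y}.ncard = (G.matchingsOn (A \ {x, y})).ncard := by
  have hxA : x ∉ A \ {x, y} := fun h => h.2 (Or.inl rfl)
  have hyA : y ∉ A \ {x, y} := fun h => h.2 (Or.inr rfl)
  refine Set.BijOn.ncard_eq (f := fun M => M.deleteVerts {x, y})
    (Set.InvOn.bijOn (f' := fun N => N ⊔ G.subgraphOfAdj hxy) ⟨?_, ?_⟩ ?_ ?_)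
  · rintro M ⟨⟨-, hM⟩, h⟩
    exact hM.deleteVerts_sup_subgraphOfAdj h
  · rintro N ⟨hN, -⟩
    exact Subgraph.sup_subgraphOfAdj_deleteVerts hxy (hN ▸ hxA) (hN ▸ hyA)
  · rintro M ⟨⟨rfl, hM⟩, h⟩
    exact ⟨rfl, hM.deleteVerts_pair h⟩
  · rintro N ⟨hNA, hN⟩
    refine ⟨⟨?_, hN.sup_subgraphOfAdj hxy (hNA ▸ hxA) (hNA ▸ hyA)⟩, Or.inr rfl⟩
    rw [Subgraph.verts_sup, hNA, subgraphOfAdj_verts]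
    exact Set.sdiff_union_of_subset (Set.pair_subset hx hy)

theorem ncard_matchingsOn_of_forall_adj {A : Set V} {x y : V} (hxy : G.Adj x y) (hx : x ∈ A)
    (hy : y ∈ A) (hforced : ∀ M ∈ G.matchingsOn A, M.Adj x y) :
    (G.matchingsOn A).ncard = (G.matchingsOn (A \ {x, y})).ncard := by
  rw [← ncard_matchingsOn_adj hxy hx hy, Set.sep_eq_self_iff_mem_true.mpr hforced]

theorem forall_adj_of_unique_adj {A : Set V} {x y : V} (hx : x ∈ A)
    (hy : ∀ p ∈ A, G.Adj x p → p = y) : ∀ M ∈ G.matchingsOn A, M.Adj x y := by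
  rintro M ⟨rfl, hM⟩
  obtain ⟨p, hp, -⟩ := hM hx
  exact hy p hp.snd_mem (M.adj_sub hp) ▸ hp

theorem forall_adj_of_twin {A : Set V} {x y : V} (hx : x ∈ A) (hy : y ∈ A) (hxy : x ≠ y)
    (h : ∀ p ∈ A, ∀ q ∈ A, G.Adj x p → G.Adj y q → p ≠ y → q ≠ x → p = q) :
    ∀ M ∈ G.matchingsOn A, M.Adj x y := by
  rintro M ⟨rfl, hM⟩
  obtain ⟨p, hp, -⟩ := hM hx
  obtain ⟨q, hq, -⟩ := hM hy
  by_contra hne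
  have hpy : p ≠ y := by rintro rfl; exact hne hp
  have hqx : q ≠ x := by rintro rfl; exact hne hq.symm
  obtain rfl := h p hp.snd_mem q hq.snd_mem (M.adj_sub hp) (M.adj_sub hq) hpy hqx
  exact hxy (hM.eq_of_adj_right hp hq)

theorem numPM_induce (A : Set V) : numPM (G.induce A) = (G.matchingsOn A).ncard := by
  let f := (Embedding.induce (G := G) A).toHom
  have hf : Function.Injective f := Subtype.val_injective
  refine Set.BijOn.ncard_eq (f := Subgraph.map f)
    (Set.InvOn.bijOn (f' := Subgraph.comap f) ⟨?_, ?_⟩ ?_ ?_)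
  · exact fun M _ => Subgraph.comap_map_of_injective hf M
  · rintro N ⟨hNA, -⟩
    ext a b
    · simp [f, hNA]
    · simp only [Subgraph.map_adj, Subgraph.comap_adj, Relation.Map, f]
      refine ⟨fun ⟨_, _, ⟨_, h⟩, ha, hb⟩ => ha ▸ hb ▸ h, fun h => ?_⟩
      exact ⟨⟨a, hNA.subset h.fst_mem⟩, ⟨b, hNA.subset h.snd_mem⟩, ⟨N.adj_sub h, h⟩, rfl, rfl⟩
  · rintro M ⟨hM, hspan⟩
    refine ⟨?_, hM.map f hf⟩
    rw [Subgraph.map_verts, hspan.verts_eq_univ, Set.image_univ]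
    exact Subtype.range_val
  · rintro N ⟨hNA, hN⟩
    refine ⟨fun v _ => ?_, fun v => hNA.symm.subset v.2⟩
    obtain ⟨w, hvw, hw⟩ := hN (hNA.symm.subset v.2)
    refine ⟨⟨w, hNA.subset hvw.snd_mem⟩, ⟨N.adj_sub hvw, hvw⟩, fun w' hw' => ?_⟩
    exact Subtype.ext (hw w' hw'.2)

theorem ncard_isPerfectMatching_adj {x y : V} (hxy : G.Adj x y) :
    {M : G.Subgraph | M.IsPerfectMatching ∧ M.Adj x y}.ncard =
      (G.matchingsOn {z | z ≠ x ∧ z ≠ y}).ncard := by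
  have hA : {z | z ≠ x ∧ z ≠ y} = Set.univ \ {x, y} := by ext; simp
  rw [hA, ← ncard_matchingsOn_adj hxy (Set.mem_univ x) (Set.mem_univ y)]
  congr 1
  ext M
  simp [matchingsOn, Subgraph.IsPerfectMatching, Subgraph.isSpanning_iff, and_comm]

end SimpleGraph

section Expand

variable {V : Type*} {G : SimpleGraph V} {S : Set V} {v w : V}

def ExpandVerts.corner (hv : v ∈ S) (hvw : G.Adj v w) : ExpandVerts G S :=
  ⟨(v, some w), Or.inr ⟨hv, w, rfl, hvw⟩⟩

def ExpandVerts.plain (hv : v ∉ S) : ExpandVerts G S :=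
  ⟨(v, none), Or.inl ⟨hv, rfl⟩⟩

namespace ExpandVerts

theorem snd_eq_none {p : ExpandVerts G S} (hp : p.1.1 ∉ S) : p.1.2 = none := by
  rcases p.2 with ⟨-, h⟩ | ⟨h, -⟩
  · exact h
  · exact absurd h hp

theorem exists_snd_eq_some {p : ExpandVerts G S} (hp : p.1.1 ∈ S) :
    ∃ w, p.1.2 = some w ∧ G.Adj p.1.1 w := by
  rcases p.2 with ⟨h, -⟩ | ⟨-, h⟩
  · exact absurd hp h
  · exact h

theorem eq_of_fst_eq_of_snd_mem {p q : ExpandVerts G S} (h : p.1.1 = q.1.1)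
    (hp : p.1.2 = none ∨ p.1.2 = some v) (hq : q.1.2 = none ∨ q.1.2 = some v) : p = q := by
  refine Subtype.ext (Prod.ext h ?_)
  by_cases hS : p.1.1 ∈ S
  · obtain ⟨w, hpw, -⟩ := exists_snd_eq_some hS
    obtain ⟨w', hqw', -⟩ := exists_snd_eq_some (h ▸ hS)
    rw [hp.resolve_left (by simp [hpw]), hq.resolve_left (by simp [hqw'])]
  · rw [snd_eq_none hS, snd_eq_none (h ▸ hS)]

@[simp]
theorem val_corner (hv : v ∈ S) (hvw : G.Adj v w) : (corner hv hvw).1 = (v, some w) := rfl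

@[simp]
theorem eq_corner_iff {p : ExpandVerts G S} (hv : v ∈ S) (hvw : G.Adj v w) :
    p = corner hv hvw ↔ p.1.1 = v ∧ p.1.2 = some w := by
  simp [corner, Subtype.ext_iff, Prod.ext_iff]

@[simp]
theorem eq_plain_iff {p : ExpandVerts G S} (hv : v ∉ S) : p = plain hv ↔ p.1.1 = v := by
  refine ⟨fun h => h ▸ rfl, fun h => Subtype.ext (Prod.ext h ?_)⟩
  exact snd_eq_none (h ▸ hv)

theorem snd_mem_of_neighborSet_eq {a b c : V} (hv : v ∈ S) (hN : G.neighborSet v = {a, b, c})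
    {p : ExpandVerts G S} (hp : p.1.1 = v) :
    p.1.2 = some a ∨ p.1.2 = some b ∨ p.1.2 = some c := by
  obtain ⟨w, hw, hvw⟩ := exists_snd_eq_some (hp ▸ hv)
  have hw' : w ∈ G.neighborSet v := hp ▸ hvw
  rw [hN] at hw'
  rcases hw' with rfl | rfl | rfl <;> simp [hw]

end ExpandVerts

open ExpandVerts

theorem expand_adj_corner_iff (hv : v ∈ S) (hvw : G.Adj v w) (q : ExpandVerts G S) :
    (expand G S).Adj (corner hv hvw) q ↔
      (q.1.1 = v ∧ q.1.2 ≠ some w) ∨ (q.1.1 = w ∧ (q.1.2 = none ∨ q.1.2 = some v)) := by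
  obtain ⟨⟨b, f⟩, hq⟩ := q
  simp only [expand, fromRel_adj, corner, ne_eq, Subtype.mk.injEq, Prod.mk.injEq]
  cases f with
  | none =>
    simp only [and_true, reduceCtorEq, false_and, exists_false, and_false, or_false,
      not_false_eq_true, true_and, and_self, Option.some.injEq, or_self, false_or] at hq ⊢
    grind
  | some f =>
    have := hvw.ne
    simp only [reduceCtorEq, and_false, Option.some.injEq, exists_eq_left', false_or, not_and,
      false_and, and_self, exists_and_left, ↓existsAndEq, true_and] at hq ⊢
    grind

def expandOver (G : SimpleGraph V) (S B : Set V) : Set (ExpandVerts G S) :=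
  {p | p.1.1 ∈ B}

theorem forall_adj_corners_of_neighborSet_eq {A : Set (ExpandVerts G S)} {a b c : V}
    (hv : v ∈ S) (hN : G.neighborSet v = {a, b, c}) (hab : a ≠ b) (hva : G.Adj v a)
    (hvb : G.Adj v b) (haA : ∀ p ∈ A, p.1.1 ≠ a) (hbA : ∀ p ∈ A, p.1.1 ≠ b)
    (hxa : corner hv hva ∈ A) (hxb : corner hv hvb ∈ A) :
    ∀ M ∈ (expand G S).matchingsOn A, M.Adj (corner hv hva) (corner hv hvb) := by
  refine forall_adj_of_twin hxa hxb (by simp [hab]) ?_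
  intro p hp q hq hap hbq hpb hqa
  have hp' := ((expand_adj_corner_iff hv hva p).mp hap).resolve_right (fun h => haA p hp h.1)
  have hq' := ((expand_adj_corner_iff hv hvb q).mp hbq).resolve_right (fun h => hbA q hq h.1)
  rw [ne_eq, eq_corner_iff] at hpb hqa
  have hpc : p.1.2 = some c := by
    rcases snd_mem_of_neighborSet_eq hv hN hp'.1 with h | h | h
    exacts [absurd h hp'.2, absurd ⟨hp'.1, h⟩ hpb, h]
  have hqc : q.1.2 = some c := by
    rcases snd_mem_of_neighborSet_eq hv hN hq'.1 with h | h | h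
    exacts [absurd ⟨hq'.1, h⟩ hqa, absurd h hq'.2, h]
  exact Subtype.ext (Prod.ext (hp'.1.trans hq'.1.symm) (hpc.trans hqc.symm))

theorem forall_adj_corner_of_eq_or_eq {A : Set (ExpandVerts G S)} {y : ExpandVerts G S}
    (hv : v ∈ S) (hvw : G.Adj v w) (hx : corner hv hvw ∈ A)
    (hy : ∀ p ∈ A, p.1.1 = v ∨ p.1.1 = w ∧ (p.1.2 = none ∨ p.1.2 = some v) →
      p = corner hv hvw ∨ p = y) :
    ∀ M ∈ (expand G S).matchingsOn A, M.Adj (corner hv hvw) y := by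
  refine forall_adj_of_unique_adj hx fun p hp hxp => ?_
  have hp := hy p hp (((expand_adj_corner_iff hv hvw p).mp hxp).imp_left And.left)
  exact hp.resolve_left (by rintro rfl; exact hxp.ne rfl)

theorem ncard_matchingsOn_expandOver_triangle {B : Set V} {a b c : V} {y : ExpandVerts G S}
    (hv : v ∈ S) (hN : G.neighborSet v = {a, b, c}) (hab : a ≠ b) (haB : a ∉ B)
    (hbB : b ∉ B) (hvB : v ∈ B) (hcB : c ∈ B) (hy : y.1.1 = c)
    (hyv : y.1.2 = none ∨ y.1.2 = some v) :
    ((expand G S).matchingsOn (expandOver G S B)).ncard =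
      ((expand G S).matchingsOn (expandOver G S (B \ {v}) \ {y})).ncard := by
  have hadj : ∀ {w}, w ∈ ({a, b, c} : Set V) → G.Adj v w := fun hw => by rwa [← hN] at hw
  have hva := hadj (w := a) (by simp)
  have hvb := hadj (w := b) (by simp)
  have hvc := hadj (w := c) (by simp)
  have hfaces := fun {p : ExpandVerts G S} (hp : p.1.1 = v) => snd_mem_of_neighborSet_eq hv hN hp
  have hxc : corner hv hvc ∈ expandOver G S B \ {corner hv hva, corner hv hvb} :=
    ⟨hvB, by simpa using ⟨fun h => haB (h ▸ hcB), fun h => hbB (h ▸ hcB)⟩⟩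
  have hyB : y ∈ expandOver G S B \ {corner hv hva, corner hv hvb} :=
    ⟨show y.1.1 ∈ B from hy ▸ hcB, by simp [hy, hvc.ne.symm]⟩
  rw [ncard_matchingsOn_of_forall_adj (A := expandOver G S B)
      ((expand_adj_corner_iff hv hva _).mpr (Or.inl ⟨rfl, by simp [hab.symm]⟩)) hvB hvB
      (forall_adj_corners_of_neighborSet_eq hv hN hab hva hvb (fun p hp h => haB (h ▸ hp))
        (fun p hp h => hbB (h ▸ hp)) hvB hvB),
    ncard_matchingsOn_of_forall_adj ((expand_adj_corner_iff hv hvc _).mpr (Or.inr ⟨hy, hyv⟩))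
      hxc hyB (forall_adj_corner_of_eq_or_eq hv hvc hxc ?_)]
  · congr 2
    ext p
    simp only [expandOver, Set.mem_sdiff, Set.mem_insert_iff, Set.mem_singleton_iff,
      Set.mem_ofPred_eq, eq_corner_iff]
    constructor
    · rintro ⟨⟨hpB, hpab⟩, hpcy⟩
      refine ⟨⟨hpB, fun hpv => ?_⟩, fun h => hpcy (Or.inr h)⟩
      rcases hfaces hpv with h | h | h
      exacts [hpab (Or.inl ⟨hpv, h⟩), hpab (Or.inr ⟨hpv, h⟩), hpcy (Or.inl ⟨hpv, h⟩)]
    · rintro ⟨⟨hpB, hpv⟩, hpy⟩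
      exact ⟨⟨hpB, by tauto⟩, by tauto⟩
  · rintro p ⟨-, hpab⟩ (hpv | ⟨hpc, hpv⟩)
    · simp only [Set.mem_insert_iff, Set.mem_singleton_iff, eq_corner_iff] at hpab ⊢
      rcases hfaces hpv with h | h | h
      exacts [absurd (Or.inl ⟨hpv, h⟩) hpab, absurd (Or.inr ⟨hpv, h⟩) hpab,
        Or.inl ⟨hpv, h⟩]
    · exact Or.inr (eq_of_fst_eq_of_snd_mem (hpc.trans hy.symm) hpv hyv)

theorem ncard_matchingsOn_expandOver_triangle_plain {B : Set V} {a b c : V} (hv : v ∈ S)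
    (hN : G.neighborSet v = {a, b, c}) (hab : a ≠ b) (haB : a ∉ B) (hbB : b ∉ B)
    (hvB : v ∈ B) (hc : c ∉ S) (hcB : c ∈ B) :
    ((expand G S).matchingsOn (expandOver G S B)).ncard =
      ((expand G S).matchingsOn (expandOver G S (B \ {v, c}))).ncard := by
  rw [ncard_matchingsOn_expandOver_triangle (y := plain hc) hv hN hab haB hbB hvB hcB rfl
    (Or.inl rfl)]
  congr 2
  ext p
  simp [expandOver, and_assoc]

theorem ncard_matchingsOn_expandOver_triangle_triangle {B : Set V} {a b c d e : V}
    (hv : v ∈ S) (hN : G.neighborSet v = {a, b, c}) (hab : a ≠ b) (haB : a ∉ B)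
    (hbB : b ∉ B) (hvB : v ∈ B) (hc : c ∈ S) (hNc : G.neighborSet c = {v, d, e}) (hvd : v ≠ d)
    (hde : d ≠ e) (hcB : c ∈ B) (heB : e ∉ B) :
    ((expand G S).matchingsOn (expandOver G S B)).ncard =
      ((expand G S).matchingsOn (expandOver G S (B \ {v, c}))).ncard := by
  have hadj : ∀ {w}, w ∈ ({v, d, e} : Set V) → G.Adj c w := fun hw => by rwa [← hNc] at hw
  have hcv := hadj (w := v) (by simp)
  have hcd := hadj (w := d) (by simp)
  have hce := hadj (w := e) (by simp)
  have hfaces := fun {p : ExpandVerts G S} (hp : p.1.1 = c) => snd_mem_of_neighborSet_eq hc hNc hp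
  have hve : v ≠ e := fun h => heB (h ▸ hvB)
  have hmem : ∀ {w} (hcw : G.Adj c w), w ≠ v →
      corner hc hcw ∈ expandOver G S (B \ {v}) \ {corner hc hcv} := fun hcw hwv =>
    ⟨⟨hcB, hcv.ne⟩, by simpa using hwv⟩
  rw [ncard_matchingsOn_expandOver_triangle (y := corner hc hcv) hv hN hab haB hbB hvB hcB rfl
      (Or.inr rfl),
    ncard_matchingsOn_of_forall_adj ((expand_adj_corner_iff hc hce _).mpr
      (Or.inl ⟨rfl, by simpa using hde⟩)) (hmem hce hve.symm) (hmem hcd hvd.symm)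
      (forall_adj_corner_of_eq_or_eq hc hce (hmem hce hve.symm) ?_)]
  · congr 2
    ext p
    simp only [expandOver, Set.mem_sdiff, Set.mem_insert_iff, Set.mem_singleton_iff,
      Set.mem_ofPred_eq, eq_corner_iff]
    constructor
    · rintro ⟨⟨⟨hpB, hpv⟩, hpcv⟩, hpced⟩
      refine ⟨hpB, ?_⟩
      rintro (hpv' | hpc)
      · exact hpv hpv'
      · rcases hfaces hpc with h | h | h
        exacts [hpcv ⟨hpc, h⟩, hpced (Or.inr ⟨hpc, h⟩), hpced (Or.inl ⟨hpc, h⟩)]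
    · rintro ⟨hpB, hpvc⟩
      exact ⟨⟨⟨hpB, fun h => hpvc (Or.inl h)⟩, fun h => hpvc (Or.inr h.1)⟩,
        fun h => hpvc (Or.inr (h.elim And.left And.left))⟩
  · rintro p ⟨⟨hpB, -⟩, hpcv⟩ (hpc | ⟨hpe, -⟩)
    · simp only [Set.mem_singleton_iff, eq_corner_iff] at hpcv ⊢
      rcases hfaces hpc with h | h | h
      exacts [absurd ⟨hpc, h⟩ hpcv, Or.inr ⟨hpc, h⟩, Or.inl ⟨hpc, h⟩]
    · exact absurd (hpe ▸ hpB) heB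

end Expand

namespace G't

variable {t : ℕ}

-- `up s j` is `u_{s+1}^{j+1}`, or `u` when `s = t`.
def up (s : Fin (t + 1)) (j : Fin 4) : (Fin (t + 1) × Fin 4) ⊕ Bool :=
  if h : (s : ℕ) < t then Sum.inl (⟨s + 1, by omega⟩, j) else Sum.inr false

theorem inl_mem_Ssub_three {s : Fin (t + 1)} {j : Fin 4} :
    Sum.inl (s, j) ∈ Ssub t 3 ↔ j = 1 ∨ j = 3 ∨ s = 0 := by
  simp only [Ssub, Sset]
  fin_cases j <;> simp

theorem neighborSet_inl_three (s : Fin (t + 1)) :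
    (G't t).neighborSet (Sum.inl (s, 3)) = {up s 2, Sum.inr true, Sum.inl (s, 2)} := by
  ext w
  simp only [mem_neighborSet, G't, fromRel_adj, Sset, up]
  split_ifs <;> rcases w with ⟨s', j'⟩ | _ | _ <;> simp
  all_goals grind

theorem neighborSet_inl_one (s : Fin (t + 1)) :
    (G't t).neighborSet (Sum.inl (s, 1)) = {Sum.inl (s, 2), Sum.inr true, Sum.inl (s, 0)} := by
  ext w
  simp only [mem_neighborSet, G't, fromRel_adj, Sset]
  rcases w with ⟨s', j'⟩ | _ | _ <;> simp
  all_goals grind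

theorem neighborSet_inl_zero_zero :
    (G't t).neighborSet (Sum.inl (0, 0)) = {up 0 0, Sum.inr true, Sum.inl (0, 1)} := by
  ext w
  simp only [mem_neighborSet, G't, fromRel_adj, Sset, up]
  split_ifs <;> rcases w with ⟨s', j'⟩ | _ | _ <;> simp
  all_goals grind

theorem neighborSet_inl_zero_two :
    (G't t).neighborSet (Sum.inl (0, 2)) = {Sum.inl (0, 3), Sum.inl (0, 1), Sum.inr true} := by
  ext w
  simp only [mem_neighborSet, G't, fromRel_adj, Sset]
  rcases w with ⟨s', j'⟩ | _ | _ <;> simp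
  all_goals grind

theorem up_ne_inr_true (s : Fin (t + 1)) (j : Fin 4) : up s j ≠ Sum.inr true := by
  unfold up
  split_ifs <;> simp

def levelsBelow (t m : ℕ) : Set ((Fin (t + 1) × Fin 4) ⊕ Bool) :=
  Sum.inl '' {p | (p.1 : ℕ) < m}

@[simp]
theorem inl_mem_levelsBelow {m : ℕ} {s : Fin (t + 1)} {j : Fin 4} :
    Sum.inl (s, j) ∈ levelsBelow t m ↔ (s : ℕ) < m := by
  simp [levelsBelow]

@[simp]
theorem inr_notMem_levelsBelow {m : ℕ} {b : Bool} : Sum.inr b ∉ levelsBelow t m := by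
  simp [levelsBelow]

theorem up_notMem_levelsBelow (s : Fin (t + 1)) (j : Fin 4) {m : ℕ} (hm : m ≤ s + 1) :
    up s j ∉ levelsBelow t m := by
  unfold up
  split_ifs <;> simp
  omega

theorem levelsBelow_succ_sdiff (s : Fin (t + 1)) :
    (levelsBelow t (s + 1) \ {Sum.inl (s, 3), Sum.inl (s, 2)}) \
      {Sum.inl (s, 1), Sum.inl (s, 0)} = levelsBelow t s := by
  ext (⟨s', j⟩ | b)
  · simp only [Set.mem_sdiff, inl_mem_levelsBelow, Set.mem_insert_iff, Set.mem_singleton_iff,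
      Sum.inl.injEq, Prod.mk.injEq]
    grind
  · simp

theorem levelsBelow_one_sdiff :
    (levelsBelow t 1 \ {Sum.inl (0, 3), Sum.inl (0, 2)}) \ {Sum.inl (0, 0), Sum.inl (0, 1)} =
      levelsBelow t 0 := by
  ext (⟨s', j⟩ | b)
  · simp only [Set.mem_sdiff, inl_mem_levelsBelow, Set.mem_insert_iff, Set.mem_singleton_iff,
      Sum.inl.injEq, Prod.mk.injEq]
    grind
  · simp

open ExpandVerts

theorem ncard_matchingsOn_levelsBelow_succ_of_ne_zero (s : Fin (t + 1)) (hs : s ≠ 0) :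
    ((expand (G't t) (Ssub t 3)).matchingsOn
        (expandOver (G't t) (Ssub t 3) (levelsBelow t (s + 1)))).ncard =
      ((expand (G't t) (Ssub t 3)).matchingsOn
        (expandOver (G't t) (Ssub t 3) (levelsBelow t s))).ncard := by
  rw [ncard_matchingsOn_expandOver_triangle_plain (inl_mem_Ssub_three.mpr (by simp))
      (neighborSet_inl_three s) (up_ne_inr_true s 2) (up_notMem_levelsBelow s 2 le_rfl)
      (by simp) (by simp) (by simp [inl_mem_Ssub_three, hs]) (by simp),
    ncard_matchingsOn_expandOver_triangle_plain (inl_mem_Ssub_three.mpr (by simp))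
      (neighborSet_inl_one s) (by simp) (by simp) (by simp) (by simp)
      (by simp [inl_mem_Ssub_three, hs]) (by simp),
    levelsBelow_succ_sdiff]

theorem ncard_matchingsOn_levelsBelow_one :
    ((expand (G't t) (Ssub t 3)).matchingsOn
        (expandOver (G't t) (Ssub t 3) (levelsBelow t 1))).ncard =
      ((expand (G't t) (Ssub t 3)).matchingsOn
        (expandOver (G't t) (Ssub t 3) (levelsBelow t 0))).ncard := by
  have hN01 : (G't t).neighborSet (Sum.inl (0, 1)) =
      {Sum.inl (0, 0), Sum.inl (0, 2), Sum.inr true} := by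
    rw [neighborSet_inl_one]
    ext
    simp only [Set.mem_insert_iff, Set.mem_singleton_iff]
    tauto
  rw [ncard_matchingsOn_expandOver_triangle_triangle (inl_mem_Ssub_three.mpr (by simp))
      (neighborSet_inl_three 0) (up_ne_inr_true 0 2) (up_notMem_levelsBelow 0 2 (by simp))
      (by simp) (by simp) (inl_mem_Ssub_three.mpr (by simp)) neighborSet_inl_zero_two (by simp)
      (by simp) (by simp) (by simp),
    ncard_matchingsOn_expandOver_triangle_triangle (inl_mem_Ssub_three.mpr (by simp))
      neighborSet_inl_zero_zero (up_ne_inr_true 0 0)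
      (fun h => up_notMem_levelsBelow 0 0 (by simp) h.1) (by simp) (by simp)
      (inl_mem_Ssub_three.mpr (by simp)) hN01 (by simp) (by simp) (by simp) (by simp),
    levelsBelow_one_sdiff]

theorem ncard_matchingsOn_levelsBelow_succ (s : Fin (t + 1)) :
    ((expand (G't t) (Ssub t 3)).matchingsOn
        (expandOver (G't t) (Ssub t 3) (levelsBelow t (s + 1)))).ncard =
      ((expand (G't t) (Ssub t 3)).matchingsOn
        (expandOver (G't t) (Ssub t 3) (levelsBelow t s))).ncard := by
  rcases eq_or_ne s 0 with rfl | hs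
  · exact ncard_matchingsOn_levelsBelow_one
  · exact ncard_matchingsOn_levelsBelow_succ_of_ne_zero s hs

theorem ncard_matchingsOn_levelsBelow {m : ℕ} (hm : m ≤ t + 1) :
    ((expand (G't t) (Ssub t 3)).matchingsOn
        (expandOver (G't t) (Ssub t 3) (levelsBelow t m))).ncard = 1 := by
  induction m with
  | zero =>
    have h : expandOver (G't t) (Ssub t 3) (levelsBelow t 0) = ∅ := by
      ext (⟨⟨⟨s, j⟩ | b, f⟩, hp⟩) <;> simp [expandOver]
    rw [h, matchingsOn_empty, Set.ncard_singleton]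
  | succ m ih =>
    exact (ncard_matchingsOn_levelsBelow_succ ⟨m, by omega⟩).trans (ih (by omega))

theorem setOf_ne_uVert_ne_u'Vert3 :
    {z | z ≠ uVert t ∧ z ≠ u'Vert3 t} =
      expandOver (G't t) (Ssub t 3) (levelsBelow t (t + 1)) := by
  ext (⟨⟨⟨s, j⟩ | b, f⟩, hp⟩)
  · simpa [expandOver, uVert, u'Vert3] using Nat.le_of_lt_succ s.2
  · obtain rfl : f = none :=
      snd_eq_none (p := ⟨(Sum.inr b, f), hp⟩) (by cases b <;> simp [Ssub, Sset])
    cases b <;> simp [expandOver, uVert, u'Vert3]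

theorem expand_adj_uVert_u'Vert3 : (expand (G't t) (Ssub t 3)).Adj (uVert t) (u'Vert3 t) := by
  simp [expand, uVert, u'Vert3, G't, Sset, Subtype.ext_iff]

end G't

theorem stmt7_general (t : ℕ) :
    Set.ncard {M : (expand (G't t) (Ssub t 3)).Subgraph |
        M.IsPerfectMatching ∧ M.Adj (uVert t) (u'Vert3 t)} = 1 ∧
      numPM ((expand (G't t) (Ssub t 3)).induce
        {z | z ≠ uVert t ∧ z ≠ u'Vert3 t}) = 1 := by
  rw [ncard_isPerfectMatching_adj G't.expand_adj_uVert_u'Vert3, numPM_induce,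
    G't.setOf_ne_uVert_ne_u'Vert3]
  exact ⟨G't.ncard_matchingsOn_levelsBelow le_rfl, G't.ncard_matchingsOn_levelsBelow le_rfl⟩

/-- For every even `n ≥ 18` with `n ≡ 6 (mod 8)`, i.e. `n = 6 + 8(t+1)`
with `t ≥ 1`, the edge `u u'` is a solitary edge of `G''_n = G'_t⟨S₃⟩`; that is, it
lies in exactly one perfect matching.  Equivalently, `G''_n − {u, u'}` has exactly
one perfect matching. -/
theorem stmt7 (n t : ℕ) (ht : 1 ≤ t) (heq : n = 6 + 8 * (t + 1)) :
    Set.ncard {M : (expand (G't t) (Ssub t 3)).Subgraph |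
        M.IsPerfectMatching ∧ M.Adj (uVert t) (u'Vert3 t)} = 1 ∧
      numPM ((expand (G't t) (Ssub t 3)).induce
        {z | z ≠ uVert t ∧ z ≠ u'Vert3 t}) = 1 :=
  stmt7_general t
end
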